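/- The set of irreducible (minimal nonempty) stopping sets of the base matrix B(l,r,L) is exactly the set of two-element subsets {α, β} with α, β in a common block T_i. -/

import Mathlib

open Finset

/-- A set of column indices `S` is a stopping set of `H` if the submatrix of `H`
on the columns in `S` has no row of Hamming weight exactly one. -/
def isStoppingSet {m n : ℕ} (H : Matrix (Fin m) (Fin n) (ZMod 2)) (S : Finset (Fin n)) : Prop :=
  ∀ i : Fin m, (S.filter (fun j => H i j = 1)).card ≠ 1

/-- `len S = 1 + max_{a,b ∈ S} |a - b|` (for nonempty `S`; truncated subtraction
over both orders realizes the absolute value). -/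
def len {n : ℕ} (S : Finset (Fin n)) : ℕ :=
  1 + S.sup (fun a => S.sup (fun b => (a : ℕ) - (b : ℕ)))

/-- `spanM H` is the minimum of `len S` over nonempty stopping sets `S` of `H`. -/
noncomputable def spanM {m n : ℕ} (H : Matrix (Fin m) (Fin n) (ZMod 2)) : ℕ :=
  sInf {w | ∃ S : Finset (Fin n), S.Nonempty ∧ isStoppingSet H S ∧ len S = w}

/-- A nonempty stopping set is irreducible (minimal) if no proper nonempty subset
is a stopping set. -/
def isIrreducible {m n : ℕ} (H : Matrix (Fin m) (Fin n) (ZMod 2)) (S : Finset (Fin n)) : Prop :=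
  S.Nonempty ∧ isStoppingSet H S ∧ ∀ S' : Finset (Fin n), S' ⊂ S → S'.Nonempty → ¬ isStoppingSet H S'

/-- The base matrix `B(l,r,L)` with `k = r/l` (0-indexed): column `q` belongs to
block `q / k` and has ones exactly in rows `q/k, …, q/k + (l-1)`. -/
def B (l k L : ℕ) : Matrix (Fin (L + l - 1)) (Fin (k * L)) (ZMod 2) :=
  fun p q => if (q : ℕ) / k ≤ (p : ℕ) ∧ (p : ℕ) ≤ (q : ℕ) / k + (l - 1) then 1 else 0

section StoppingSet

variable {m n : ℕ} {H : Matrix (Fin m) (Fin n) (ZMod 2)}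

lemma isStoppingSet_singleton_iff {q : Fin n} :
    isStoppingSet H {q} ↔ ∀ i, H i q ≠ 1 := by
  refine forall_congr' fun i => ?_
  rw [filter_singleton]
  split_ifs with h <;> simp [h]

lemma isStoppingSet_pair_of_col_eq {α β : Fin n} (hne : α ≠ β)
    (hcol : ∀ i, H i α = H i β) : isStoppingSet H {α, β} := by
  intro i
  rw [filter_insert, filter_singleton, ← hcol i]
  split_ifs <;> simp [hne]

lemma isIrreducible_pair (hsingle : ∀ q, ¬ isStoppingSet H {q}) {α β : Fin n} (hne : α ≠ β)
    (hstop : isStoppingSet H {α, β}) : isIrreducible H {α, β} := by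
  refine ⟨insert_nonempty _ _, hstop, fun T hT hTne => ?_⟩
  have hcard : #T = 1 := by
    have := card_lt_card hT
    rw [card_pair hne] at this
    have := hTne.card_pos
    omega
  obtain ⟨q, rfl⟩ := card_eq_one.mp hcard
  exact hsingle q

lemma isIrreducible.eq_of_subset {S T : Finset (Fin n)} (hS : isIrreducible H S) (hTS : T ⊆ S)
    (hTne : T.Nonempty) (hT : isStoppingSet H T) : T = S := by
  by_contra hne
  exact hS.2.2 T (Finset.ssubset_iff_subset_ne.mpr ⟨hTS, hne⟩) hTne hT

end StoppingSet

section BaseMatrix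

variable {l k L : ℕ}

lemma B_eq_one_iff (p : Fin (L + l - 1)) (q : Fin (k * L)) :
    B l k L p q = 1 ↔ (q : ℕ) / k ≤ p ∧ (p : ℕ) ≤ (q : ℕ) / k + (l - 1) := by
  unfold B
  split_ifs with h <;> simp [h]

def blockRow (hl : 0 < l) (q : Fin (k * L)) : Fin (L + l - 1) :=
  ⟨(q : ℕ) / k, by have := Nat.div_lt_of_lt_mul q.isLt; omega⟩

lemma B_blockRow_self (hl : 0 < l) (q : Fin (k * L)) : B l k L (blockRow hl q) q = 1 :=
  (B_eq_one_iff _ _).mpr ⟨le_rfl, Nat.le_add_right _ _⟩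

lemma div_eq_of_B_blockRow_eq_one (hl : 0 < l) {q j : Fin (k * L)} (hqj : q ≤ j)
    (h : B l k L (blockRow hl q) j = 1) : (j : ℕ) / k = (q : ℕ) / k :=
  le_antisymm ((B_eq_one_iff _ _).mp h).1 (Nat.div_le_div_right (Fin.le_def.mp hqj))

lemma not_isStoppingSet_B_singleton (hl : 0 < l) (q : Fin (k * L)) :
    ¬ isStoppingSet (B l k L) {q} := fun h =>
  isStoppingSet_singleton_iff.mp h (blockRow hl q) (B_blockRow_self hl q)

lemma isStoppingSet_B_pair {α β : Fin (k * L)} (hne : α ≠ β)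
    (hblk : (α : ℕ) / k = (β : ℕ) / k) : isStoppingSet (B l k L) {α, β} :=
  isStoppingSet_pair_of_col_eq hne fun p => by simp only [B, hblk]

/-- The block row of the least element of `S` meets `S` only inside that block, and it cannot
have weight one. -/
lemma exists_same_block_pair_of_isStoppingSet (hl : 0 < l) {S : Finset (Fin (k * L))}
    (hSne : S.Nonempty) (hS : isStoppingSet (B l k L) S) :
    ∃ α ∈ S, ∃ β ∈ S, α ≠ β ∧ (α : ℕ) / k = (β : ℕ) / k := by
  set α := S.min' hSne
  have hα : α ∈ S := S.min'_mem hSne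
  have hrow : 1 < #(S.filter fun j => B l k L (blockRow hl α) j = 1) := by
    have hpos : 0 < #(S.filter fun j => B l k L (blockRow hl α) j = 1) :=
      card_pos.mpr ⟨α, mem_filter.mpr ⟨hα, B_blockRow_self hl α⟩⟩
    have := hS (blockRow hl α)
    omega
  obtain ⟨β, hβ, hβα⟩ := exists_mem_ne hrow α
  obtain ⟨hβS, hβrow⟩ := mem_filter.mp hβ
  exact ⟨α, hα, β, hβS, hβα.symm,
    (div_eq_of_B_blockRow_eq_one hl (S.min'_le β hβS) hβrow).symm⟩

end BaseMatrix

theorem irreducible_iff_same_block_pair_general (l k L : ℕ) (hl : 0 < l)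
    (S : Finset (Fin (k * L))) :
    isIrreducible (B l k L) S ↔
      ∃ α β : Fin (k * L), α ≠ β ∧ (α : ℕ) / k = (β : ℕ) / k ∧ S = {α, β} := by
  constructor
  · intro hS
    obtain ⟨α, hα, β, hβ, hne, hblk⟩ := exists_same_block_pair_of_isStoppingSet hl hS.1 hS.2.1
    refine ⟨α, β, hne, hblk, ?_⟩
    exact (hS.eq_of_subset (insert_subset hα (singleton_subset_iff.mpr hβ))
      (insert_nonempty _ _) (isStoppingSet_B_pair hne hblk)).symm
  · rintro ⟨α, β, hne, hblk, rfl⟩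
    exact isIrreducible_pair (not_isStoppingSet_B_singleton hl) hne (isStoppingSet_B_pair hne hblk)

/-- The irreducible stopping sets of `B(l,r,L)` are exactly the two-element subsets
`{α, β}` with `α ≠ β` in a common block. -/
theorem irreducible_iff_same_block_pair (l k L : ℕ) (hl : 0 < l) (hk : 2 ≤ k) (hL : 0 < L)
    (S : Finset (Fin (k * L))) :
    isIrreducible (B l k L) S ↔
      ∃ α β : Fin (k * L), α ≠ β ∧ (α : ℕ) / k = (β : ℕ) / k ∧ S = {α, β} :=
  irreducible_iff_same_block_pair_general l k L hl S
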